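/- arXiv:2009.08426 — 4 statements merged into one kernel-verified Lean document; each statement's English description precedes it below -/
import Mathlib

section
/- For the diamond Lie algebra d = [e₁,e₂]=e₂, [e₁,e₃]=-e₃, [e₂,e₃]=e₄ and the 2-cochain ψ given by ψ(e₂,e₃)=e₁, ψ(e₂,e₄)=-e₂, ψ(e₃,e₄)=e₃ (other basis values zero), the deformed bracket d + tψ satisfies the Jacobi identity for every scalar t. -/
/-- The complex diamond algebra bracket. -/
def diamondBracketC (x y : Fin 4 → ℂ) : Fin 4 → ℂ :=
  ![0, x 0 * y 1 - x 1 * y 0, -(x 0 * y 2 - x 2 * y 0), x 1 * y 2 - x 2 * y 1]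

/-- The 2-cochain `ψ(e₂,e₃)=e₁, ψ(e₂,e₄)=-e₂, ψ(e₃,e₄)=e₃`. -/
def psiC (x y : Fin 4 → ℂ) : Fin 4 → ℂ :=
  ![x 1 * y 2 - x 2 * y 1, -(x 1 * y 3 - x 3 * y 1), x 2 * y 3 - x 3 * y 2, 0]

/-- The deformed bracket `d + tψ`. -/
def defBracket (t : ℂ) (x y : Fin 4 → ℂ) : Fin 4 → ℂ :=
  diamondBracketC x y + t • psiC x y

/-- `d + tψ` satisfies the Jacobi identity for every `t`. -/
theorem stmt_7 (t : ℂ) :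
    ∀ x y z : Fin 4 → ℂ,
      defBracket t (defBracket t x y) z + defBracket t (defBracket t y z) x +
        defBracket t (defBracket t z x) y = 0 := by
  intro x y z
  funext i
  fin_cases i <;>
    simp [defBracket, diamondBracketC, psiC, Pi.add_apply, Pi.smul_apply, smul_eq_mul] <;>
    ring
end

section
/- The 5-dimensional nilpotent Lie algebra W₃ with nonzero brackets [e₃,e₄]=e₂, [e₃,e₅]=e₁, [e₄,e₅]=e₃ satisfies the Jacobi identity, is nilpotent, and admits the invariant nondegenerate symmetric bilinear form B with B(e₁,e₄)=B(e₄,e₁)=-1, B(e₂,e₅)=B(e₅,e₂)=1, B(e₃,e₃)=1, B(e₅,e₅)=1, other pairings zero. -/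
/-- The bracket of `W₃`: `[e₃,e₄]=e₂`, `[e₃,e₅]=e₁`, `[e₄,e₅]=e₃`. -/
def w3Bracket (x y : Fin 5 → ℂ) : Fin 5 → ℂ :=
  ![x 2 * y 4 - x 4 * y 2, x 2 * y 3 - x 3 * y 2, x 3 * y 4 - x 4 * y 3, 0, 0]

/-- The invariant form of `W₃`: `B(e₁,e₄)=-1`, `B(e₂,e₅)=1`, `B(e₃,e₃)=1`,
`B(e₅,e₅)=1`. -/
def w3Form (x y : Fin 5 → ℂ) : ℂ :=
  -(x 0 * y 3 + x 3 * y 0) + (x 1 * y 4 + x 4 * y 1) + x 2 * y 2 + x 4 * y 4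

/-- `W₃` satisfies Jacobi, is nilpotent (4-fold brackets vanish),
and `w3Form` is a symmetric nondegenerate invariant bilinear form for it. -/
theorem stmt_15 :
    (∀ x y z : Fin 5 → ℂ,
      w3Bracket (w3Bracket x y) z + w3Bracket (w3Bracket y z) x +
        w3Bracket (w3Bracket z x) y = 0) ∧
    (∀ x y z w : Fin 5 → ℂ, w3Bracket (w3Bracket (w3Bracket x y) z) w = 0) ∧
    (∀ x y : Fin 5 → ℂ, w3Form x y = w3Form y x) ∧
    (∀ x : Fin 5 → ℂ, (∀ y : Fin 5 → ℂ, w3Form x y = 0) → x = 0) ∧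
    (∀ x y z : Fin 5 → ℂ, w3Form (w3Bracket x y) z = w3Form x (w3Bracket y z)) := by
  refine ⟨?_, ?_, ?_, ?_, ?_⟩
  · intro x y z
    funext i
    fin_cases i <;> simp [w3Bracket] <;> ring
  · intro x y z w
    funext i
    fin_cases i <;> simp [w3Bracket] <;> ring
  · intro x y
    simp [w3Form]; ring
  · intro x h
    funext i
    have h0 := h ![0, 0, 0, -1, 0]
    have h1 := h ![0, 0, 0, 0, 1]
    have h2 := h ![0, 0, 1, 0, 0]
    have h3 := h ![-1, 0, 0, 0, 0]
    have h4 := h ![0, 1, 0, 0, 1]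
    simp [w3Form] at h0 h1 h2 h3 h4
    fin_cases i <;> simp_all <;> linear_combination h4 - h1
  · intro x y z
    simp [w3Form, w3Bracket]; ring
end

section
/- Let g be a Lie algebra with invariant nondegenerate symmetric bilinear form β. If φ is a cyclic 2-cochain (β(φ(x,y),z) totally antisymmetric) and ψ is a cyclic 2-cochain, then the Nijenhuis-Richardson-type bracket [φ,ψ](x,y,z) defined via the circle product (φ∘ψ)(x,y,z) = φ(ψ(x,y),z) - φ(ψ(x,z),y) + φ(ψ(y,z),x) with [φ,ψ] = φ∘ψ + ψ∘φ is again cyclic, i.e., β([φ,ψ](x,y,z),w) is totally antisymmetric in x,y,z,w. -/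
/-- the bracket of two cyclic 2-cochains on a metric Lie algebra
is cyclic, where `(φ∘ψ)(x,y,z) = φ(ψ(x,y),z) - φ(ψ(x,z),y) + φ(ψ(y,z),x)` and
`[φ,ψ] = φ∘ψ + ψ∘φ`. -/
theorem stmt_17 {k V : Type*} [Field k] [LieRing V] [LieAlgebra k V]
    (β : V →ₗ[k] V →ₗ[k] k)
    (hsymm : ∀ x y : V, β x y = β y x)
    (hnondeg : ∀ x : V, (∀ y : V, β x y = 0) → x = 0)
    (hinv : ∀ x y z : V, β ⁅x, y⁆ z = β x ⁅y, z⁆)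
    (φ ψ : V →ₗ[k] V →ₗ[k] V)
    (hφalt : ∀ x y : V, φ x y = -φ y x)
    (hψalt : ∀ x y : V, ψ x y = -ψ y x)
    (hφcyc : ∀ x y z : V, β (φ x y) z = -β (φ x z) y)
    (hψcyc : ∀ x y z : V, β (ψ x y) z = -β (ψ x z) y) :
    ∀ x y z w : V,
      β (φ (ψ x y) z - φ (ψ x z) y + φ (ψ y z) x +
          ψ (φ x y) z - ψ (φ x z) y + ψ (φ y z) x) w =
        -β (φ (ψ y x) z - φ (ψ y z) x + φ (ψ x z) y +
            ψ (φ y x) z - ψ (φ y z) x + ψ (φ x z) y) w ∧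
      β (φ (ψ x y) z - φ (ψ x z) y + φ (ψ y z) x +
          ψ (φ x y) z - ψ (φ x z) y + ψ (φ y z) x) w =
        -β (φ (ψ x z) y - φ (ψ x y) z + φ (ψ z y) x +
            ψ (φ x z) y - ψ (φ x y) z + ψ (φ z y) x) w ∧
      β (φ (ψ x y) z - φ (ψ x z) y + φ (ψ y z) x +
          ψ (φ x y) z - ψ (φ x z) y + ψ (φ y z) x) w =
        -β (φ (ψ x y) w - φ (ψ x w) y + φ (ψ y w) x +
            ψ (φ x y) w - ψ (φ x w) y + ψ (φ y w) x) z := by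

  -- rotation lemma for φ: the 3-form β(φ a b) c is alternating, hence cyclic
  have hφrot : ∀ a b c : V, β (φ a b) c = β (φ b c) a := by
    intro a b c
    rw [hφalt a b, map_neg, LinearMap.neg_apply, hφcyc b a c, neg_neg]
  have hψrot : ∀ a b c : V, β (ψ a b) c = β (ψ b c) a := by
    intro a b c
    rw [hψalt a b, map_neg, LinearMap.neg_apply, hψcyc b a c, neg_neg]
  -- key exchange identity
  have K : ∀ a b c d : V, β (φ (ψ a b) c) d = β (ψ (φ c d) a) b := by
    intro a b c d
    rw [hφrot (ψ a b) c d, hsymm, hψrot a b (φ c d), hψrot b (φ c d) a]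
  intro x y z w
  refine ⟨?_, ?_, ?_⟩
  · have : (φ (ψ x y) z - φ (ψ x z) y + φ (ψ y z) x +
          ψ (φ x y) z - ψ (φ x z) y + ψ (φ y z) x) =
        -(φ (ψ y x) z - φ (ψ y z) x + φ (ψ x z) y +
            ψ (φ y x) z - ψ (φ y z) x + ψ (φ x z) y) := by
      rw [hψalt y x, hφalt y x]
      simp only [map_neg, LinearMap.neg_apply]
      abel
    rw [this, map_neg, LinearMap.neg_apply]
  · have : (φ (ψ x y) z - φ (ψ x z) y + φ (ψ y z) x +
          ψ (φ x y) z - ψ (φ x z) y + ψ (φ y z) x) =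
        -(φ (ψ x z) y - φ (ψ x y) z + φ (ψ z y) x +
            ψ (φ x z) y - ψ (φ x y) z + ψ (φ z y) x) := by
      rw [hψalt z y, hφalt z y]
      simp only [map_neg, LinearMap.neg_apply]
      abel
    rw [this, map_neg, LinearMap.neg_apply]
  · simp only [map_add, map_sub, LinearMap.add_apply, LinearMap.sub_apply]
    linear_combination hφcyc (ψ x y) z w + hψcyc (φ x y) z w - K x z y w +
      K y z x w + K y w x z - K x w y z
end

section
/- For the 6-dimensional nilpotent Lie algebra W₄ with nonzero brackets [e₁,e₅]=e₄, [e₁,e₃]=-e₂, [e₃,e₅]=-e₆, the symmetric bilinear form B with B(eᵢ,eⱼ)=1 when i+j=7 and 0 otherwise is a nondegenerate invariant inner product, and the bracket satisfies the Jacobi identity. -/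
/-- The bracket of `W₄`: `[e₁,e₅]=e₄`, `[e₁,e₃]=-e₂`, `[e₃,e₅]=-e₆`. -/
def w4Bracket (x y : Fin 6 → ℂ) : Fin 6 → ℂ :=
  ![0, -(x 0 * y 2 - x 2 * y 0), 0, x 0 * y 4 - x 4 * y 0, 0,
    -(x 2 * y 4 - x 4 * y 2)]

/-- The anti-diagonal form `B(eᵢ,eⱼ) = 1` iff `i+j = 7` (1-based). -/
def w4Form (x y : Fin 6 → ℂ) : ℂ :=
  x 0 * y 5 + x 1 * y 4 + x 2 * y 3 + x 3 * y 2 + x 4 * y 1 + x 5 * y 0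

lemma vec6_five (a b c d e f : ℂ) : ![a,b,c,d,e,f] 5 = f := rfl

/-- `W₄` satisfies Jacobi and `w4Form` is a symmetric
nondegenerate invariant bilinear form for it. -/
theorem stmt_18 :
    (∀ x y z : Fin 6 → ℂ,
      w4Bracket (w4Bracket x y) z + w4Bracket (w4Bracket y z) x +
        w4Bracket (w4Bracket z x) y = 0) ∧
    (∀ x y : Fin 6 → ℂ, w4Form x y = w4Form y x) ∧
    (∀ x : Fin 6 → ℂ, (∀ y : Fin 6 → ℂ, w4Form x y = 0) → x = 0) ∧
    (∀ x y z : Fin 6 → ℂ, w4Form (w4Bracket x y) z = w4Form x (w4Bracket y z)) := by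
  refine ⟨?_, ?_, ?_, ?_⟩
  · intro x y z
    funext i
    fin_cases i <;> simp [w4Bracket, vec6_five]
  · intro x y
    simp [w4Form]; ring
  · intro x h
    funext i
    have h0 := h ![0, 0, 0, 0, 0, 1]
    have h1 := h ![0, 0, 0, 0, 1, 0]
    have h2 := h ![0, 0, 0, 1, 0, 0]
    have h3 := h ![0, 0, 1, 0, 0, 0]
    have h4 := h ![0, 1, 0, 0, 0, 0]
    have h5 := h ![1, 0, 0, 0, 0, 0]
    simp [w4Form, vec6_five] at h0 h1 h2 h3 h4 h5
    fin_cases i <;> simp [*]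
  · intro x y z
    simp [w4Form, w4Bracket, vec6_five]; ring
end
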